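/- Let ζ be a primitive 5th root of unity. Then (ζq;q^2)_∞ (ζ^{-1}q;q^2)_∞ (q^2;q^2)_∞ = (q^{25};q^{50})_∞^2 (q^{50};q^{50})_∞ - (ζ + ζ^4) q (q^{15};q^{50})_∞ (q^{35};q^{50})_∞ (q^{50};q^{50})_∞ + (ζ^2 + ζ^3) q^4 (q^{5};q^{50})_∞ (q^{45};q^{50})_∞ (q^{50};q^{50})_∞, as formal power series in q over Q(ζ). -/

import Mathlib

open PowerSeries Finset

/-- The infinite product `∏_{i=0}^∞ f i` of formal power series, defined coefficientwise. -/
noncomputable def prodInf {K : Type*} [CommRing K] (f : ℕ → PowerSeries K) : PowerSeries K :=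
  PowerSeries.mk fun d => PowerSeries.coeff d (∏ i ∈ Finset.range (d + 1), f i)

/-!
By the Jacobi triple product, the left-hand side is the theta series `∑_j (-ζ)^j q^(j²)` and the
three products on the right are the theta series `∑_k (-1)^k q^(25k² + Dk)` for `D = 0, 10, 20`.
Writing `j = 5k + r` and using `ζ⁵ = 1` splits the first series into five such series; the
classes `r = 3, 4` reduce to `r = 2, 1` under `k ↦ -1 - k`.

The triple product is the limit of Cauchy's finite identity
`∏_{i<n} (1 - c q^(M+D+2Mi)) (1 - c⁻¹ q^(M-D+2Mi)) = ∑_j (-c)^j q^(Mj²+Dj) [2n, n+j]_(q^(2M))`,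
proved by induction from the two q-Pascal rules. Since `[2n, n+j]_Q (Q;Q)_n ≡ 1` modulo
`Q^(n-|j|+1)`, the coefficient of `q^d` in the limit only sees the terms with `Mj² + Dj = d`.
-/

lemma Int.lt_zero_or_eq_zero_or_exists_eq_succ (k : ℤ) :
    k < 0 ∨ k = 0 ∨ ∃ m : ℕ, k = (m + 1 : ℕ) := by
  rcases lt_trichotomy k 0 with h | h | h
  · exact .inl h
  · exact .inr (.inl h)
  · exact .inr (.inr ⟨(k - 1).toNat, by omega⟩)

section GaussBinom

variable {R : Type*} [CommRing R] (q : R)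

/-- The q-Pochhammer symbol `(q;q)_n`. -/
def qPochhammer (n : ℕ) : R := ∏ i ∈ range n, (1 - q ^ (i + 1))

def gaussBinom : ℕ → ℕ → R
  | _, 0 => 1
  | 0, _ + 1 => 0
  | n + 1, k + 1 => gaussBinom n k + q ^ (k + 1) * gaussBinom n (k + 1)

@[simp] lemma gaussBinom_zero_right (n : ℕ) : gaussBinom q n 0 = 1 := by cases n <;> rfl

lemma gaussBinom_succ_succ (n k : ℕ) :
    gaussBinom q (n + 1) (k + 1) = gaussBinom q n k + q ^ (k + 1) * gaussBinom q n (k + 1) :=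
  rfl

lemma gaussBinom_of_lt : ∀ {n k : ℕ}, n < k → gaussBinom q n k = 0
  | 0, _ + 1, _ => rfl
  | n + 1, k + 1, h => by
    rw [gaussBinom_succ_succ, gaussBinom_of_lt (by omega), gaussBinom_of_lt (by omega)]
    simp

@[simp] lemma gaussBinom_self : ∀ n, gaussBinom q n n = 1
  | 0 => rfl
  | n + 1 => by rw [gaussBinom_succ_succ, gaussBinom_self n, gaussBinom_of_lt q (by omega)]; simp

lemma gaussBinom_succ_succ' : ∀ {n k : ℕ}, k ≤ n →
    gaussBinom q (n + 1) (k + 1) = q ^ (n - k) * gaussBinom q n k + gaussBinom q n (k + 1)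
  | 0, 0, _ => by simp [gaussBinom_of_lt]
  | n + 1, 0, _ => by
    have h₁ := gaussBinom_succ_succ q n 0
    have h₂ := gaussBinom_succ_succ' (Nat.zero_le n)
    simp only [gaussBinom_zero_right, Nat.sub_zero, zero_add, mul_one] at h₁ h₂ ⊢
    rw [gaussBinom_succ_succ q (n + 1) 0, zero_add, gaussBinom_zero_right]
    linear_combination q * h₂ - h₁
  | n + 1, k + 1, hk => by
    obtain hk | rfl : k < n ∨ k = n := by omega
    · rw [gaussBinom_succ_succ q (n + 1)]
      conv_lhs => rw [gaussBinom_succ_succ' (by omega : k ≤ n),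
        gaussBinom_succ_succ' (by omega : k + 1 ≤ n)]
      rw [gaussBinom_succ_succ q n k, gaussBinom_succ_succ q n (k + 1)]
      obtain ⟨m, rfl⟩ : ∃ m, n = k + 1 + m := ⟨n - (k + 1), by omega⟩
      rw [show k + 1 + m + 1 - (k + 1) = m + 1 by omega, show k + 1 + m - k = m + 1 by omega,
        show k + 1 + m - (k + 1) = m by omega]
      ring
    · simp [gaussBinom_of_lt]

lemma gaussBinom_symm : ∀ {n k : ℕ}, k ≤ n → gaussBinom q n k = gaussBinom q n (n - k)
  | n, 0, _ => by simp
  | n + 1, k + 1, hk => by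
    obtain hk | rfl : k < n ∨ k = n := by omega
    · obtain ⟨m, rfl⟩ : ∃ m, n = k + 1 + m := ⟨n - (k + 1), by omega⟩
      rw [gaussBinom_succ_succ, gaussBinom_symm (by omega : k ≤ k + 1 + m),
        gaussBinom_symm (by omega : k + 1 ≤ k + 1 + m),
        show k + 1 + m + 1 - (k + 1) = m + 1 by omega,
        gaussBinom_succ_succ' q (by omega : m ≤ k + 1 + m), show k + 1 + m - k = m + 1 by omega,
        show k + 1 + m - (k + 1) = m by omega, show k + 1 + m - m = k + 1 by omega]
      ring
    · simp

lemma qPochhammer_succ (n : ℕ) : qPochhammer q (n + 1) = qPochhammer q n * (1 - q ^ (n + 1)) :=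
  prod_range_succ _ _

lemma qPochhammer_mul_prod_Ico {m n : ℕ} (h : m ≤ n) :
    qPochhammer q m * ∏ i ∈ Ico m n, (1 - q ^ (i + 1)) = qPochhammer q n :=
  prod_range_mul_prod_Ico _ h

lemma qPochhammer_mul_qPochhammer_mul_gaussBinom : ∀ {n k : ℕ}, k ≤ n →
    qPochhammer q k * qPochhammer q (n - k) * gaussBinom q n k = qPochhammer q n
  | n, 0, _ => by simp [qPochhammer]
  | n + 1, k + 1, hk => by
    obtain hk | rfl : k < n ∨ k = n := by omega
    · obtain ⟨m, rfl⟩ : ∃ m, n = k + 1 + m := ⟨n - (k + 1), by omega⟩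
      have h₁ := qPochhammer_mul_qPochhammer_mul_gaussBinom (by omega : k ≤ k + 1 + m)
      have h₂ := qPochhammer_mul_qPochhammer_mul_gaussBinom (by omega : k + 1 ≤ k + 1 + m)
      rw [show k + 1 + m - k = m + 1 by omega, qPochhammer_succ q m] at h₁
      rw [show k + 1 + m - (k + 1) = m by omega, qPochhammer_succ q k] at h₂
      rw [show k + 1 + m + 1 - (k + 1) = m + 1 by omega, qPochhammer_succ q m,
        qPochhammer_succ q k, qPochhammer_succ q (k + 1 + m), gaussBinom_succ_succ]
      linear_combination (1 - q ^ (k + 1)) * h₁ + q ^ (k + 1) * (1 - q ^ (m + 1)) * h₂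
    · simp [qPochhammer]

def gaussBinomZ (N : ℕ) (k : ℤ) : R := if k < 0 then 0 else gaussBinom q N k.toNat

variable {q}

lemma gaussBinomZ_of_neg {N : ℕ} {k : ℤ} (hk : k < 0) : gaussBinomZ q N k = 0 := if_pos hk

@[simp] lemma gaussBinomZ_natCast (N k : ℕ) : gaussBinomZ q N k = gaussBinom q N k := by
  simp [gaussBinomZ]

lemma gaussBinomZ_of_lt {N : ℕ} {k : ℤ} (hk : N < k) : gaussBinomZ q N k = 0 := by
  rw [gaussBinomZ, if_neg (by omega), gaussBinom_of_lt q (by omega)]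

lemma gaussBinomZ_eq_zero_of_notMem {N : ℕ} {k : ℤ} (hk : k ∉ Set.Icc 0 (N : ℤ)) :
    gaussBinomZ q N k = 0 := by
  rw [Set.mem_Icc, not_and_or, not_le, not_le] at hk
  exact hk.elim gaussBinomZ_of_neg gaussBinomZ_of_lt

lemma hasFiniteSupport_gaussBinomZ (N : ℕ) : (gaussBinomZ q N).HasFiniteSupport :=
  (Set.finite_Icc 0 (N : ℤ)).subset fun _ hk =>
    by_contra fun h => hk (gaussBinomZ_eq_zero_of_notMem h)

lemma Function.HasFiniteSupport.mul_gaussBinomZ (f : ℤ → R) (N : ℕ) {g : ℤ → ℤ}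
    (hg : g.Injective) : (fun j => f j * gaussBinomZ q N (g j)).HasFiniteSupport :=
  .fun_mul_right f ((hasFiniteSupport_gaussBinomZ N).comp_of_injective hg)

lemma gaussBinomZ_succ (N : ℕ) (k : ℤ) :
    gaussBinomZ q (N + 1) k = gaussBinomZ q N (k - 1) + q ^ k.toNat * gaussBinomZ q N k := by
  obtain hk | rfl | ⟨k, rfl⟩ := Int.lt_zero_or_eq_zero_or_exists_eq_succ k
  · simp [gaussBinomZ_of_neg, hk, show k - 1 < 0 by omega]
  · simp [gaussBinomZ]
  · rw [Nat.cast_succ, add_sub_cancel_right, ← Nat.cast_succ, Int.toNat_natCast]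
    simp only [gaussBinomZ_natCast, gaussBinom_succ_succ]

lemma gaussBinomZ_succ' (N : ℕ) (k : ℤ) :
    gaussBinomZ q (N + 1) k
      = q ^ (N + 1 - k).toNat * gaussBinomZ q N (k - 1) + gaussBinomZ q N k := by
  obtain hk | rfl | ⟨k, rfl⟩ := Int.lt_zero_or_eq_zero_or_exists_eq_succ k
  · simp [gaussBinomZ_of_neg, hk, show k - 1 < 0 by omega]
  · simp [gaussBinomZ]
  · rw [show ((k + 1 : ℕ) : ℤ) - 1 = k by push_cast; ring]
    simp only [gaussBinomZ_natCast]
    rcases le_or_gt k N with hkN | hkN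
    · rw [gaussBinom_succ_succ' q hkN, show (N + 1 - ((k + 1 : ℕ) : ℤ)).toNat = N - k by omega]
    · simp [gaussBinom_of_lt q hkN, gaussBinom_of_lt q (by omega : N < k + 1),
        gaussBinom_of_lt q (by omega : N + 1 < k + 1)]

lemma gaussBinomZ_two_mul_add_two (n : ℕ) (j : ℤ) :
    gaussBinomZ q (2 * n + 2) (n + 1 + j)
      = q ^ (n + 1 - j).toNat * gaussBinomZ q (2 * n) (n + j - 1)
        + (1 + q ^ (2 * n + 1)) * gaussBinomZ q (2 * n) (n + j)
        + q ^ (n + 1 + j).toNat * gaussBinomZ q (2 * n) (n + 1 + j) := by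
  have hmid : q ^ (n + 1 - j).toNat * (q ^ (n + j).toNat * gaussBinomZ q (2 * n) (n + j))
      = q ^ (2 * n + 1) * gaussBinomZ q (2 * n) (n + j) := by
    by_cases hj : n + j ∈ Set.Icc 0 ((2 * n : ℕ) : ℤ)
    · rw [← mul_assoc, ← pow_add, show (n + 1 - j).toNat + (n + j).toNat = 2 * n + 1 by
        simp only [Set.mem_Icc] at hj; omega]
    · simp [gaussBinomZ_eq_zero_of_notMem hj]
  have h := gaussBinomZ_succ' (q := q) (2 * n + 1) (n + 1 + j)
  rw [show ((2 * n + 1 : ℕ) : ℤ) + 1 - (n + 1 + j) = n + 1 - j by push_cast; ring] at h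
  rw [h, gaussBinomZ_succ, gaussBinomZ_succ, show (n : ℤ) + 1 + j - 1 - 1 = n + j - 1 by ring,
    show (n : ℤ) + 1 + j - 1 = n + j by ring]
  linear_combination hmid

end GaussBinom

section Congruences

variable {R : Type*} [CommRing R]

lemma one_sub_mul_pow_smodEq_one (a : R) {q : R} {m k : ℕ} (h : m ≤ k) :
    1 - a * q ^ k ≡ 1 [SMOD Ideal.span {q ^ m}] := by
  rw [SModEq.sub_mem, sub_sub_cancel_left, neg_mem_iff, Ideal.mem_span_singleton]
  exact (pow_dvd_pow q h).mul_left a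

lemma one_sub_pow_smodEq_one {q : R} {m k : ℕ} (h : m ≤ k) :
    1 - q ^ k ≡ 1 [SMOD Ideal.span {q ^ m}] := by
  simpa using one_sub_mul_pow_smodEq_one (1 : R) (q := q) h

lemma smodEq_span_X_pow_iff {n : ℕ} {φ ψ : PowerSeries R} :
    φ ≡ ψ [SMOD Ideal.span {X ^ n}] ↔ ∀ m < n, coeff m φ = coeff m ψ := by
  simp [SModEq.sub_mem, Ideal.mem_span_singleton, X_pow_dvd_iff, sub_eq_zero]

lemma prodInf_smodEq_prod {f : ℕ → PowerSeries R}
    (hf : ∀ i, f i ≡ 1 [SMOD Ideal.span {X ^ (i + 1)}]) (n : ℕ) :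
    prodInf f ≡ ∏ i ∈ range n, f i [SMOD Ideal.span {X ^ n}] := by
  refine smodEq_span_X_pow_iff.2 fun m hm => ?_
  rw [prodInf, coeff_mk, ← prod_range_mul_prod_Ico f (by omega : m + 1 ≤ n)]
  refine smodEq_span_X_pow_iff.1 ?_ m (Nat.lt_succ_self m)
  conv_lhs => rw [← mul_one (∏ i ∈ range (m + 1), f i)]
  refine SModEq.mul SModEq.rfl ?_
  rw [← prod_const_one (s := Ico (m + 1) n)]
  refine SModEq.prod fun i hi => ((hf i).mono (Ideal.span_singleton_le_span_singleton.2 ?_)).symm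
  exact pow_dvd_pow X (by simp at hi; omega)

lemma not_isOfFinOrder_X_pow [Nontrivial R] {e : ℕ} (he : 0 < e) :
    ¬IsOfFinOrder (X ^ e : PowerSeries R) := by
  rw [isOfFinOrder_iff_pow_eq_one]
  rintro ⟨k, hk, h⟩
  have := congrArg (coeff 0) h
  rw [← pow_mul, coeff_X_pow, coeff_one, if_neg (by positivity), if_pos rfl] at this
  exact zero_ne_one this

variable [IsDomain R] {q : R}

lemma qPochhammer_ne_zero (hq : ¬IsOfFinOrder q) (n : ℕ) : qPochhammer q n ≠ 0 :=
  prod_ne_zero_iff.2 fun i _ => sub_ne_zero.2 fun h =>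
    hq (isOfFinOrder_iff_pow_eq_one.2 ⟨i + 1, i.succ_pos, h.symm⟩)

/-- `[2n, n+b]_q (q;q)_n` is a product of factors `1 - q^k` with `k > n - b`. -/
lemma gaussBinom_mul_qPochhammer_smodEq_one (hq : ¬IsOfFinOrder q) {n b : ℕ} (hb : b ≤ n) :
    gaussBinom q (2 * n) (n + b) * qPochhammer q n ≡ 1 [SMOD Ideal.span {q ^ (n - b + 1)}] := by
  have hsplit : gaussBinom q (2 * n) (n + b) * qPochhammer q n
      = (∏ i ∈ Ico (n + b) (2 * n), (1 - q ^ (i + 1))) * ∏ i ∈ Ico (n - b) n, (1 - q ^ (i + 1)) := by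
    refine mul_left_cancel₀
      (mul_ne_zero (qPochhammer_ne_zero hq (n + b)) (qPochhammer_ne_zero hq (n - b))) ?_
    have h := qPochhammer_mul_qPochhammer_mul_gaussBinom q (by omega : n + b ≤ 2 * n)
    rw [show 2 * n - (n + b) = n - b by omega] at h
    calc _ = qPochhammer q (n + b) * qPochhammer q (n - b) * gaussBinom q (2 * n) (n + b)
          * qPochhammer q n := by ring
      _ = qPochhammer q (n + b) * (∏ i ∈ Ico (n + b) (2 * n), (1 - q ^ (i + 1)))
          * (qPochhammer q (n - b) * ∏ i ∈ Ico (n - b) n, (1 - q ^ (i + 1))) := by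
        rw [h, qPochhammer_mul_prod_Ico q (by omega), qPochhammer_mul_prod_Ico q (by omega)]
      _ = _ := by ring
  have hfactors (s : Finset ℕ) (hs : ∀ i ∈ s, n - b ≤ i) :
      ∏ i ∈ s, (1 - q ^ (i + 1)) ≡ 1 [SMOD Ideal.span {q ^ (n - b + 1)}] := by
    simpa using SModEq.prod (s := s) (y := fun _ => (1 : R)) fun i hi =>
      one_sub_pow_smodEq_one (by have := hs i hi; omega)
  rw [hsplit]
  simpa using (hfactors _ fun i hi => by simp at hi; omega).mul
    (hfactors _ fun i hi => by simp at hi; omega)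

lemma gaussBinomZ_mul_qPochhammer_smodEq_one (hq : ¬IsOfFinOrder q) {n : ℕ} {j : ℤ}
    (hj : j.natAbs ≤ n) :
    gaussBinomZ q (2 * n) (n + j) * qPochhammer q n
      ≡ 1 [SMOD Ideal.span {q ^ (n - j.natAbs + 1)}] := by
  convert gaussBinom_mul_qPochhammer_smodEq_one hq hj using 2
  rcases le_or_gt 0 j with h | h
  · rw [show (n : ℤ) + j = ((n + j.natAbs : ℕ) : ℤ) by omega, gaussBinomZ_natCast]
  · rw [show (n : ℤ) + j = ((n - j.natAbs : ℕ) : ℤ) by omega, gaussBinomZ_natCast,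
      gaussBinom_symm q (by omega), show 2 * n - (n - j.natAbs) = n + j.natAbs by omega]

end Congruences

lemma neg_C_mul_X_pow_mul_C_mul_X_pow {R : Type*} [CommRing R] (a b : R) (m k : ℕ) :
    -(C a * X ^ m) * (C b * X ^ k) = C (-(a * b)) * X ^ (m + k) := by
  rw [pow_add, map_neg, map_mul]; ring

lemma finsum_eq_sum_range_finsum_mul_add {M : Type*} [AddCommMonoid M] {g : ℤ → M}
    (hg : g.HasFiniteSupport) (m : ℕ) [NeZero m] :
    ∑ᶠ j, g j = ∑ r ∈ range m, ∑ᶠ k : ℤ, g (k * m + r) := by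
  have hinj (r : ℕ) : Function.Injective fun k : ℤ => k * m + r := fun a b h => by
    simpa [NeZero.ne m] using h
  rw [← finsum_comp_equiv (Int.divModEquiv m).symm,
    finsum_curry (fun p => g ((Int.divModEquiv m).symm p))
      (hg.comp_of_injective (Int.divModEquiv m).symm.injective)]
  simp only [finsum_eq_sum_of_fintype, Int.divModEquiv_symm_apply]
  rw [finsum_sum_comm univ (fun (k : ℤ) (r : Fin m) => g (k * m + (r : ℕ)))
      fun r _ => hg.comp_of_injective (hinj r),
    Fin.sum_univ_eq_sum_range (fun r : ℕ => ∑ᶠ k : ℤ, g (k * m + r))]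

def thetaExp (M D : ℕ) (j : ℤ) : ℤ := M * j ^ 2 + D * j

lemma thetaExp_add_one (M D : ℕ) (j : ℤ) :
    thetaExp M D (j + 1) = thetaExp M D j + 2 * M * j + M + D := by
  unfold thetaExp; ring

lemma thetaExp_nonneg {M D : ℕ} (hD : D ≤ M) (j : ℤ) : 0 ≤ thetaExp M D j := by
  have hD' : (D : ℤ) ≤ M := by exact_mod_cast hD
  have hM : (0 : ℤ) ≤ M := by positivity
  unfold thetaExp
  rcases le_or_gt 0 j with hj | hj
  · positivity
  · nlinarith [mul_nonneg hM (mul_nonneg_of_nonpos_of_nonpos hj.le (by omega : j + 1 ≤ 0)),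
      mul_nonneg (sub_nonneg.2 hD') (neg_nonneg.2 hj.le)]

lemma natAbs_le_thetaExp {M D : ℕ} (hD : D < M) (j : ℤ) : (j.natAbs : ℤ) ≤ thetaExp M D j := by
  rw [Int.natCast_natAbs]
  have hD' : (D : ℤ) + 1 ≤ M := by exact_mod_cast hD
  have hM : (0 : ℤ) ≤ M := by positivity
  unfold thetaExp
  rcases le_or_gt 0 j with hj | hj
  · rw [abs_of_nonneg hj]
    have : 0 ≤ j * (j - 1) := by rcases (by omega : j = 0 ∨ 1 ≤ j) with rfl | h <;> nlinarith
    nlinarith [mul_nonneg (by omega : (0 : ℤ) ≤ M - 1) (sq_nonneg j),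
      mul_nonneg (by positivity : (0 : ℤ) ≤ D) hj]
  · rw [abs_of_neg hj]
    nlinarith [mul_nonneg hM (mul_nonneg_of_nonpos_of_nonpos hj.le (by omega : j + 1 ≤ 0)),
      mul_nonneg (by omega : (0 : ℤ) ≤ M - D - 1) (neg_nonneg.2 hj.le)]

section Theta

variable {K : Type*} [Field K]

noncomputable def thetaTerm (c : K) (M D : ℕ) (j : ℤ) : PowerSeries K :=
  C ((-c) ^ j) * X ^ (thetaExp M D j).toNat

/-- The coefficients of the theta series `∑_{j ∈ ℤ} (-c)^j X^(M j² + D j)`, indexed by `ℤ` so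
that shifted coefficients need no truncated subtraction. -/
noncomputable def thetaCoeff (c : K) (M D : ℕ) (n : ℤ) : K :=
  ∑ᶠ j : ℤ, if thetaExp M D j = n then (-c) ^ j else 0

noncomputable def theta (c : K) (M D : ℕ) : PowerSeries K :=
  PowerSeries.mk fun d => thetaCoeff c M D d

variable {c : K} {M D : ℕ}

lemma neg_C_mul_X_pow_mul_thetaTerm_mul_gaussBinomZ (hc : c ≠ 0) (hD : D ≤ M) (n : ℕ) (j : ℤ) :
    -(C c * X ^ (M + D + 2 * M * n)) *
        (thetaTerm c M D j * gaussBinomZ (X ^ (2 * M)) (2 * n) (n + j))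
      = thetaTerm c M D (j + 1) * (X ^ (2 * M)) ^ (n - j).toNat
          * gaussBinomZ (X ^ (2 * M)) (2 * n) (n + j) := by
  by_cases hj : j ≤ n
  · have hexp : M + D + 2 * M * n + (thetaExp M D j).toNat
        = (thetaExp M D (j + 1)).toNat + 2 * M * (n - j).toNat := by
      apply Nat.cast_injective (R := ℤ)
      push_cast [Int.toNat_of_nonneg (thetaExp_nonneg hD _),
        Int.toNat_of_nonneg (sub_nonneg.2 hj)]
      rw [thetaExp_add_one]
      ring
    rw [← mul_assoc, thetaTerm, thetaTerm, neg_C_mul_X_pow_mul_C_mul_X_pow, hexp,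
      zpow_add_one₀ (neg_ne_zero.2 hc), show (-c) ^ j * -c = -(c * (-c) ^ j) by ring, pow_add,
      pow_mul]
    ring
  · rw [gaussBinomZ_of_lt (by push_cast; omega), mul_zero, mul_zero, mul_zero]

lemma neg_C_inv_mul_X_pow_mul_thetaTerm_mul_gaussBinomZ (hc : c ≠ 0) (hD : D ≤ M) (n : ℕ)
    (j : ℤ) :
    -(C c⁻¹ * X ^ (M - D + 2 * M * n)) *
        (thetaTerm c M D (j + 1) * gaussBinomZ (X ^ (2 * M)) (2 * n) (n + 1 + j))
      = thetaTerm c M D j * (X ^ (2 * M)) ^ (n + 1 + j).toNat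
          * gaussBinomZ (X ^ (2 * M)) (2 * n) (n + 1 + j) := by
  by_cases hj : -(n : ℤ) - 1 ≤ j
  · have hexp : M - D + 2 * M * n + (thetaExp M D (j + 1)).toNat
        = (thetaExp M D j).toNat + 2 * M * (n + 1 + j).toNat := by
      apply Nat.cast_injective (R := ℤ)
      push_cast [hD, Int.toNat_of_nonneg (thetaExp_nonneg hD _),
        Int.toNat_of_nonneg (by omega : 0 ≤ (n : ℤ) + 1 + j)]
      rw [thetaExp_add_one]
      ring
    rw [← mul_assoc, thetaTerm, thetaTerm, neg_C_mul_X_pow_mul_C_mul_X_pow, hexp,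
      zpow_add_one₀ (neg_ne_zero.2 hc), show -(c⁻¹ * ((-c) ^ j * -c)) = (-c) ^ j by field_simp,
      pow_add, pow_mul]
    ring
  · rw [gaussBinomZ_of_neg (by omega), mul_zero, mul_zero, mul_zero]

lemma one_sub_C_mul_X_pow_mul_one_sub_C_inv_mul_X_pow (hc : c ≠ 0) (hD : D ≤ M) (n : ℕ) :
    (1 - C c * X ^ (M + D + 2 * M * n)) * (1 - C c⁻¹ * X ^ (M - D + 2 * M * n))
      = 1 + (X ^ (2 * M)) ^ (2 * n + 1) - C c * X ^ (M + D + 2 * M * n)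
        - C c⁻¹ * X ^ (M - D + 2 * M * n) := by
  have hcc : C c * C c⁻¹ = (1 : PowerSeries K) := by rw [← map_mul, mul_inv_cancel₀ hc, map_one]
  have hXX : (X : PowerSeries K) ^ (M + D + 2 * M * n) * X ^ (M - D + 2 * M * n)
      = (X ^ (2 * M)) ^ (2 * n + 1) := by
    rw [← pow_add, ← pow_mul]
    congr 1
    zify [hD]
    ring
  linear_combination X ^ (M + D + 2 * M * n) * X ^ (M - D + 2 * M * n) * hcc + hXX

lemma finsum_thetaTerm_mul_gaussBinomZ_succ (hc : c ≠ 0) (hD : D ≤ M) (n : ℕ) :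
    ∑ᶠ j : ℤ, thetaTerm c M D j * gaussBinomZ (X ^ (2 * M)) (2 * (n + 1)) ((n + 1 : ℕ) + j)
      = (∑ᶠ j : ℤ, thetaTerm c M D j * gaussBinomZ (X ^ (2 * M)) (2 * n) (n + j))
          * ((1 - C c * X ^ (M + D + 2 * M * n)) * (1 - C c⁻¹ * X ^ (M - D + 2 * M * n))) := by
  set Q : PowerSeries K := X ^ (2 * M)
  set S : ℤ → PowerSeries K := fun j => thetaTerm c M D j * gaussBinomZ Q (2 * n) (n + j)
  set u : ℤ → PowerSeries K :=
    fun j => thetaTerm c M D j * Q ^ (n + 1 - j).toNat * gaussBinomZ Q (2 * n) (n + j - 1)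
  set v : ℤ → PowerSeries K :=
    fun j => thetaTerm c M D j * Q ^ (n + 1 + j).toNat * gaussBinomZ Q (2 * n) (n + 1 + j)
  have hS : S.HasFiniteSupport := .mul_gaussBinomZ _ _ (add_right_injective _)
  have hu : u.HasFiniteSupport := .mul_gaussBinomZ _ _ fun i j h => by simpa using h
  have hv : v.HasFiniteSupport := .mul_gaussBinomZ _ _ (add_right_injective _)
  have hshift (f : ℤ → PowerSeries K) : ∑ᶠ j, f (j + 1) = ∑ᶠ j, f j :=
    finsum_comp_equiv (Equiv.addRight 1)
  have hu_shift (j : ℤ) : u (j + 1) = -(C c * X ^ (M + D + 2 * M * n)) * S j := by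
    simp only [u, S]
    rw [show (n : ℤ) + 1 - (j + 1) = n - j by ring, show (n : ℤ) + (j + 1) - 1 = n + j by ring,
      neg_C_mul_X_pow_mul_thetaTerm_mul_gaussBinomZ hc hD]
  have hv_eq (j : ℤ) : v j = -(C c⁻¹ * X ^ (M - D + 2 * M * n)) * S (j + 1) := by
    simp only [v, S]
    rw [show (n : ℤ) + (j + 1) = n + 1 + j by ring,
      neg_C_inv_mul_X_pow_mul_thetaTerm_mul_gaussBinomZ hc hD]
  have hpascal (j : ℤ) : thetaTerm c M D j * gaussBinomZ Q (2 * (n + 1)) ((n + 1 : ℕ) + j)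
      = u j + (1 + Q ^ (2 * n + 1)) * S j + v j := by
    rw [show 2 * (n + 1) = 2 * n + 2 by ring, Nat.cast_succ, gaussBinomZ_two_mul_add_two]
    ring
  calc _ = ∑ᶠ j, (u j + (1 + Q ^ (2 * n + 1)) * S j + v j) := finsum_congr hpascal
    _ = ∑ᶠ j, u (j + 1) + (1 + Q ^ (2 * n + 1)) * ∑ᶠ j, S j + ∑ᶠ j, v j := by
      rw [finsum_add_distrib (hu.fun_add (.fun_mul_right _ hS)) hv,
        finsum_add_distrib hu (.fun_mul_right _ hS), mul_finsum, hshift u]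
    _ = _ := by
      rw [finsum_congr hu_shift, finsum_congr hv_eq, ← mul_finsum, ← mul_finsum, hshift S,
        one_sub_C_mul_X_pow_mul_one_sub_C_inv_mul_X_pow hc hD]
      ring

/-- Cauchy's finite form of the Jacobi triple product. -/
theorem prod_mul_prod_eq_finsum_thetaTerm_mul_gaussBinomZ (hc : c ≠ 0) (hD : D ≤ M) (n : ℕ) :
    (∏ i ∈ range n, (1 - C c * X ^ (M + D + 2 * M * i))) *
        ∏ i ∈ range n, (1 - C c⁻¹ * X ^ (M - D + 2 * M * i))
      = ∑ᶠ j : ℤ, thetaTerm c M D j * gaussBinomZ (X ^ (2 * M)) (2 * n) (n + j) := by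
  induction n with
  | zero =>
    rw [finsum_eq_single _ 0 fun j hj => by
      rw [gaussBinomZ_eq_zero_of_notMem (by simp [hj]), mul_zero]]
    simp [thetaTerm, thetaExp, gaussBinomZ]
  | succ n ih =>
    rw [finsum_thetaTerm_mul_gaussBinomZ_succ hc hD, prod_range_succ, prod_range_succ, ← ih]
    ring

lemma coeff_thetaTerm_mul_gaussBinomZ_mul_qPochhammer (hD : D < M) {d n : ℕ} (hdn : d < n)
    (j : ℤ) :
    coeff d (thetaTerm c M D j *
        (gaussBinomZ (X ^ (2 * M)) (2 * n) (n + j) * qPochhammer (X ^ (2 * M)) n))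
      = if thetaExp M D j = d then (-c) ^ j else 0 := by
  have hE := thetaExp_nonneg hD.le j
  have habs := natAbs_le_thetaExp hD j
  rw [thetaTerm, mul_assoc, coeff_C_mul, coeff_X_pow_mul']
  by_cases hEd : thetaExp M D j ≤ d
  · have hcongr := gaussBinomZ_mul_qPochhammer_smodEq_one
      (not_isOfFinOrder_X_pow (R := K) (by omega : 0 < 2 * M)) (by omega : j.natAbs ≤ n)
    rw [← pow_mul, smodEq_span_X_pow_iff] at hcongr
    have hlt : d - (thetaExp M D j).toNat < 2 * M * (n - j.natAbs + 1) := by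
      have := Nat.mul_le_mul_right (n - j.natAbs + 1) (by omega : 1 ≤ 2 * M)
      omega
    rw [if_pos (by omega), hcongr _ hlt, coeff_one]
    by_cases h : thetaExp M D j = d
    · rw [if_pos (by omega), if_pos h, mul_one]
    · rw [if_neg (by omega), if_neg h, mul_zero]
  · rw [if_neg (by omega), if_neg (by omega), mul_zero]

theorem jacobi_triple_product (hc : c ≠ 0) (hD : D < M) :
    prodInf (fun i => 1 - C c * X ^ (M + D + 2 * M * i)) *
        prodInf (fun i => 1 - C c⁻¹ * X ^ (M - D + 2 * M * i)) *
        prodInf (fun i => 1 - (X : PowerSeries K) ^ (2 * M * (i + 1)))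
      = theta c M D := by
  ext d
  have hM (i : ℕ) : i ≤ 2 * M * i := Nat.le_mul_of_pos_left i (by omega)
  have hA i : 1 - C c * X ^ (M + D + 2 * M * i) ≡ 1 [SMOD Ideal.span {X ^ (i + 1)}] :=
    one_sub_mul_pow_smodEq_one _ (by have := hM i; omega)
  have hB i : 1 - C c⁻¹ * X ^ (M - D + 2 * M * i) ≡ 1 [SMOD Ideal.span {X ^ (i + 1)}] :=
    one_sub_mul_pow_smodEq_one _ (by have := hM i; omega)
  have hE i : 1 - (X : PowerSeries K) ^ (2 * M * (i + 1)) ≡ 1 [SMOD Ideal.span {X ^ (i + 1)}] :=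
    one_sub_pow_smodEq_one (hM (i + 1))
  have htrunc := smodEq_span_X_pow_iff.1 (((prodInf_smodEq_prod hA (d + 1)).mul
    (prodInf_smodEq_prod hB (d + 1))).mul (prodInf_smodEq_prod hE (d + 1))) d (by omega)
  have hqP : ∏ i ∈ range (d + 1), (1 - (X : PowerSeries K) ^ (2 * M * (i + 1)))
      = qPochhammer (X ^ (2 * M)) (d + 1) := by simp only [qPochhammer, pow_mul]
  rw [htrunc, prod_mul_prod_eq_finsum_thetaTerm_mul_gaussBinomZ hc hD.le, hqP, finsum_mul,
    map_finsum _ ((Function.HasFiniteSupport.mul_gaussBinomZ _ _ (add_right_injective _)).fun_mul_left _),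
    theta, coeff_mk, thetaCoeff]
  exact finsum_congr fun j => by
    rw [mul_assoc, coeff_thetaTerm_mul_gaussBinomZ_mul_qPochhammer hD (Nat.lt_succ_self d)]

lemma hasFiniteSupport_thetaCoeff (hD : D < M) (c : K) (n : ℤ) :
    (fun j => if thetaExp M D j = n then (-c) ^ j else 0).HasFiniteSupport := by
  refine (Set.finite_Icc (-n) n).subset fun j hj => ?_
  have h : thetaExp M D j = n := by by_contra h; simp [h] at hj
  have := natAbs_le_thetaExp hD j
  simp only [Set.mem_Icc]
  omega

lemma thetaCoeff_of_neg (hD : D ≤ M) {n : ℤ} (hn : n < 0) : thetaCoeff c M D n = 0 :=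
  finsum_eq_zero_of_forall_eq_zero fun j => if_neg (by have := thetaExp_nonneg hD j; omega)

lemma coeff_X_pow_mul_theta (hD : D ≤ M) (t d : ℕ) :
    coeff d (X ^ t * theta c M D) = thetaCoeff c M D (d - t) := by
  rw [coeff_X_pow_mul', theta]
  split_ifs with h
  · rw [coeff_mk, Nat.cast_sub h]
  · rw [thetaCoeff_of_neg hD (by omega)]

/-- Splitting `j ∈ ℤ` by its residue `r` modulo `m`. -/
lemma thetaCoeff_one_zero_eq_sum (hc : c ≠ 0) (m : ℕ) [NeZero m] (n : ℤ) :
    thetaCoeff c 1 0 n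
      = ∑ r ∈ range m, (-c) ^ r * thetaCoeff (-(-c) ^ m) (m ^ 2) (2 * m * r) (n - r ^ 2) := by
  rw [thetaCoeff, finsum_eq_sum_range_finsum_mul_add (hasFiniteSupport_thetaCoeff one_pos c n) m]
  refine sum_congr rfl fun r _ => ?_
  rw [thetaCoeff, mul_finsum]
  refine finsum_congr fun k => ?_
  have hexp : thetaExp 1 0 (k * m + r) = thetaExp (m ^ 2) (2 * m * r) k + r ^ 2 := by
    simp only [thetaExp]; push_cast; ring
  rw [hexp, neg_neg, zpow_add₀ (neg_ne_zero.2 hc), mul_comm k, zpow_mul, zpow_natCast,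
    zpow_natCast]
  split_ifs with h₁ h₂ h₂
  · ring
  · exact absurd (by linarith) h₂
  · exact absurd (by linarith) h₁
  · rw [mul_zero]

/-- The substitution `j ↦ -1 - j`. -/
lemma thetaCoeff_eq_inv_mul (hc : c ≠ 0) (hD : D ≤ 2 * M) (n : ℤ) :
    thetaCoeff c M D n = (-c)⁻¹ * thetaCoeff c⁻¹ M (2 * M - D) (n + D - M) := by
  rw [thetaCoeff, thetaCoeff, mul_finsum,
    ← finsum_comp_equiv ((Equiv.neg ℤ).trans (Equiv.subRight 1))]
  refine finsum_congr fun k => ?_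
  simp only [Equiv.trans_apply, Equiv.neg_apply, Equiv.subRight_apply]
  have hexp : thetaExp M D (-k - 1) = thetaExp M (2 * M - D) k + M - D := by
    simp only [thetaExp]; push_cast [hD]; ring
  have hpow : (-c) ^ (-k - 1) = (-c)⁻¹ * (-c⁻¹) ^ k := by
    rw [zpow_sub₀ (neg_ne_zero.2 hc), zpow_one, zpow_neg, ← inv_zpow, neg_inv, div_eq_mul_inv,
      mul_comm]
  rw [hexp, hpow]
  split_ifs with h₁ h₂ h₂
  · rfl
  · exact absurd (by linarith) h₂
  · exact absurd (by linarith) h₁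
  · rw [mul_zero]

theorem theta_one_zero_eq_of_pow_five_eq_one {ζ : K} (hζ : ζ ^ 5 = 1) :
    theta ζ 1 0 = theta 1 25 0 - C (ζ + ζ ^ 4) * X * theta 1 25 10
      + C (ζ ^ 2 + ζ ^ 3) * X ^ 4 * theta 1 25 20 := by
  have hζ0 : ζ ≠ 0 := by rintro rfl; norm_num at hζ
  have hsign : -(-ζ) ^ 5 = 1 := by linear_combination hζ
  ext d
  rw [map_add, map_sub, mul_assoc, mul_assoc, coeff_C_mul, coeff_C_mul,
    show (X : PowerSeries K) * theta 1 25 10 = X ^ 1 * theta 1 25 10 by rw [pow_one],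
    coeff_X_pow_mul_theta (by norm_num), coeff_X_pow_mul_theta (by norm_num), theta, theta,
    coeff_mk, coeff_mk, thetaCoeff_one_zero_eq_sum hζ0 5]
  simp only [sum_range_succ, sum_range_zero, hsign]
  norm_num
  rw [thetaCoeff_eq_inv_mul one_ne_zero (by norm_num : 30 ≤ 2 * 25),
    thetaCoeff_eq_inv_mul one_ne_zero (by norm_num : 40 ≤ 2 * 25)]
  norm_num
  rw [show (d : ℤ) - 9 + 30 - 25 = d - 4 by ring, show (d : ℤ) - 16 + 40 - 25 = d - 1 by ring]
  ring

end Theta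

theorem fifth_root_jacobi_dissection_general {K : Type*} [Field K] (ζ : K)
    (hζ : IsPrimitiveRoot ζ 5) :
    prodInf (fun i => 1 - PowerSeries.C ζ * X ^ (2 * i + 1)) *
        prodInf (fun i => 1 - PowerSeries.C ζ⁻¹ * X ^ (2 * i + 1)) *
        prodInf (fun i => 1 - (X : PowerSeries K) ^ (2 * (i + 1)))
      = prodInf (fun i => 1 - (X : PowerSeries K) ^ (25 + 50 * i)) ^ 2 *
            prodInf (fun i => 1 - (X : PowerSeries K) ^ (50 * (i + 1)))
        - PowerSeries.C (ζ + ζ ^ 4) * X *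
            (prodInf (fun i => 1 - (X : PowerSeries K) ^ (15 + 50 * i)) *
              prodInf (fun i => 1 - (X : PowerSeries K) ^ (35 + 50 * i)) *
              prodInf (fun i => 1 - (X : PowerSeries K) ^ (50 * (i + 1))))
        + PowerSeries.C (ζ ^ 2 + ζ ^ 3) * X ^ 4 *
            (prodInf (fun i => 1 - (X : PowerSeries K) ^ (5 + 50 * i)) *
              prodInf (fun i => 1 - (X : PowerSeries K) ^ (45 + 50 * i)) *
              prodInf (fun i => 1 - (X : PowerSeries K) ^ (50 * (i + 1)))) := by
  have h₁ := jacobi_triple_product (hζ.ne_zero (by norm_num)) (M := 1) (D := 0) one_pos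
  have h₂ := jacobi_triple_product (K := K) one_ne_zero (M := 25) (D := 0) (by norm_num)
  have h₃ := jacobi_triple_product (K := K) one_ne_zero (M := 25) (D := 10) (by norm_num)
  have h₄ := jacobi_triple_product (K := K) one_ne_zero (M := 25) (D := 20) (by norm_num)
  norm_num [add_comm 1] at h₁ h₂ h₃ h₄
  rw [h₁, theta_one_zero_eq_of_pow_five_eq_one hζ.pow_eq_one, ← h₂, ← h₃, ← h₄]
  ring

/-- 5-dissection of `(ζq;q²)_∞ (ζ⁻¹q;q²)_∞ (q²;q²)_∞` for `ζ` a primitive 5th root of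
unity. -/
theorem fifth_root_jacobi_dissection {K : Type*} [Field K] [CharZero K] (ζ : K)
    (hζ : IsPrimitiveRoot ζ 5) :
    prodInf (fun i => 1 - PowerSeries.C ζ * X ^ (2 * i + 1)) *
        prodInf (fun i => 1 - PowerSeries.C ζ⁻¹ * X ^ (2 * i + 1)) *
        prodInf (fun i => 1 - (X : PowerSeries K) ^ (2 * (i + 1)))
      = prodInf (fun i => 1 - (X : PowerSeries K) ^ (25 + 50 * i)) ^ 2 *
            prodInf (fun i => 1 - (X : PowerSeries K) ^ (50 * (i + 1)))
        - PowerSeries.C (ζ + ζ ^ 4) * X *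
            (prodInf (fun i => 1 - (X : PowerSeries K) ^ (15 + 50 * i)) *
              prodInf (fun i => 1 - (X : PowerSeries K) ^ (35 + 50 * i)) *
              prodInf (fun i => 1 - (X : PowerSeries K) ^ (50 * (i + 1))))
        + PowerSeries.C (ζ ^ 2 + ζ ^ 3) * X ^ 4 *
            (prodInf (fun i => 1 - (X : PowerSeries K) ^ (5 + 50 * i)) *
              prodInf (fun i => 1 - (X : PowerSeries K) ^ (45 + 50 * i)) *
              prodInf (fun i => 1 - (X : PowerSeries K) ^ (50 * (i + 1)))) :=
  fifth_root_jacobi_dissection_general ζ hζ
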